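/- arXiv:1102.0518 — 3 statements merged into one kernel-verified Lean document; each statement's English description precedes it below -/
import Mathlib

section
/- Assume gcd(w_1,…,w_n) = 1 and fix k with 1 ≤ k < n. Consider the projection π : ∏_{i=1}^n ℤ/(d/w_i)ℤ → ∏_{i=k+1}^n ℤ/(d/w_i)ℤ onto the last n−k coordinates. Then the image π(M) has exactly (1/gcd(w_1,…,w_k)) · ∏_{i=k+1}^n (d/w_i) elements; i.e. a tuple of last n−k entries occurs in an element of M if and only if its weighted degree Σ_{i=k+1}^n w_i·t̃_i is divisible by gcd(w_1,…,w_k) modulo d, and the number of such tuples is (1/gcd(w_1,…,w_k)) · ∏_{i=k+1}^n (d/w_i). -/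
/-!
Write x = (a, t) with a the first k and t the last n − k coordinates. The weighted degree is
additive, and by Bézout the weighted degrees of the a's are exactly the multiples of
g = gcd(w_1, …, w_k) in ℤ/d. So t extends to an element of M iff g divides its weighted degree,
i.e. π(M) is the kernel of the weighted degree ∏_{i>k} ℤ/(d/w_i) → ℤ/g. That map is onto: its
image contains gcd(w_{k+1}, …, w_n), which is prime to g because gcd(w) = 1. Hence
|π(M)| · g = ∏_{i>k} d/w_i.
-/

open Finset

namespace ZMod

def natMulHom {e m : ℕ} (c : ℕ) (h : m ∣ c * e) : ZMod e →+ ZMod m :=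
  ZMod.lift e ⟨zmultiplesHom _ (c : ZMod m), by
    simpa [mul_comm] using (ZMod.natCast_eq_zero_iff _ _).mpr h⟩

theorem natMulHom_natCast {e m : ℕ} (c : ℕ) (h : m ∣ c * e) (x : ℕ) :
    natMulHom c h (x : ZMod e) = ((c * x : ℕ) : ZMod m) := by
  rw [natMulHom, ← Int.cast_natCast x, ZMod.lift_coe]
  simp [mul_comm]

theorem addSubgroup_eq_top_of_isUnit_mem {m : ℕ} (S : AddSubgroup (ZMod m)) {u : ZMod m}
    (hu : IsUnit u) (huS : u ∈ S) : S = ⊤ := by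
  refine (AddSubgroup.eq_top_iff' S).2 fun y => ?_
  obtain ⟨v, rfl⟩ := hu
  obtain ⟨z, hz⟩ := ZMod.intCast_surjective (((v⁻¹ : (ZMod m)ˣ) : ZMod m) * y)
  have : y = z • (v : ZMod m) := by rw [zsmul_eq_mul, hz, mul_comm, Units.mul_inv_cancel_left]
  exact this ▸ zsmul_mem huS z

end ZMod

theorem AddSubgroup.natCast_gcd_mem {R : Type*} [CommRing R] (S : AddSubgroup R) {a b : ℕ}
    (ha : (a : R) ∈ S) (hb : (b : R) ∈ S) : (a.gcd b : R) ∈ S := by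
  have hbezout : (a.gcd b : R) = a.gcdA b • (a : R) + a.gcdB b • (b : R) := by
    rw [← Int.cast_natCast, Nat.gcd_eq_gcd_ab]
    push_cast
    simp [zsmul_eq_mul, mul_comm]
  rw [hbezout]
  exact add_mem (zsmul_mem ha _) (zsmul_mem hb _)

theorem AddSubgroup.natCast_finsetGcd_mem {R ι : Type*} [CommRing R] (S : AddSubgroup R)
    (s : Finset ι) (f : ι → ℕ) (h : ∀ i ∈ s, (f i : R) ∈ S) : ((s.gcd f : ℕ) : R) ∈ S := by
  classical
  induction s using Finset.induction with
  | empty => simp [S.zero_mem]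
  | insert a s ha ih =>
    rw [gcd_insert]
    exact S.natCast_gcd_mem (h a (mem_insert_self a s)) (ih fun i hi => h i (mem_insert_of_mem hi))

theorem Finset.gcd_univ_subtype {ι α : Type*} [Fintype ι] [CommMonoidWithZero α]
    [NormalizedGCDMonoid α] (p : ι → Prop) [DecidablePred p] (f : ι → α) :
    (univ : Finset (Subtype p)).gcd (fun i => f i) = (univ.filter p).gcd f := by
  classical
  change univ.gcd (f ∘ Subtype.val) = _
  rw [← gcd_image]
  congr 1
  ext i
  simp

theorem Finset.coprime_gcd_subtype_of_gcd_eq_one {ι : Type*} [Fintype ι] {p q : ι → Prop}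
    [DecidablePred p] [DecidablePred q] (hpq : ∀ i, ¬ p i ↔ q i) (f : ι → ℕ)
    (hf : univ.gcd f = 1) :
    Nat.Coprime ((univ : Finset (Subtype p)).gcd fun i => f i)
      ((univ : Finset (Subtype q)).gcd fun i => f i) := by
  classical
  have hunion := filter_union_filter_not_eq p univ
  simp only [hpq] at hunion
  rw [gcd_univ_subtype, gcd_univ_subtype, Nat.Coprime]
  rwa [← hunion, gcd_union] at hf

theorem AddMonoidHom.card_ker_mul_card_of_surjective {G H : Type*} [AddGroup G] [AddGroup H]
    (f : G →+ H) (hf : Function.Surjective f) : Nat.card f.ker * Nat.card H = Nat.card G := by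
  rw [← AddSubgroup.card_top (G := H), ← f.range_eq_top.2 hf, ← AddSubgroup.index_ker,
    AddSubgroup.card_mul_index]

section WeightedDegree

variable {ι : Type*} [Fintype ι] {e c : ι → ℕ} {m : ℕ}

def weightedDegree (h : ∀ i, m ∣ c i * e i) : (∀ i, ZMod (e i)) →+ ZMod m :=
  ∑ i, (ZMod.natMulHom (c i) (h i)).comp (Pi.evalAddMonoidHom _ i)

variable (h : ∀ i, m ∣ c i * e i)

theorem weightedDegree_apply (x : ∀ i, ZMod (e i)) :
    weightedDegree h x = ∑ i, ZMod.natMulHom (c i) (h i) (x i) := by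
  simp [weightedDegree]

theorem weightedDegree_eq_natCast_sum [∀ i, NeZero (e i)] (x : ∀ i, ZMod (e i)) :
    weightedDegree h x = ((∑ i, c i * (x i).val : ℕ) : ZMod m) := by
  rw [weightedDegree_apply, Nat.cast_sum]
  refine Finset.sum_congr rfl fun i _ => ?_
  rw [← ZMod.natMulHom_natCast, ZMod.natCast_zmod_val]

theorem weightedDegree_single [DecidableEq ι] (j : ι) :
    weightedDegree h (Pi.single j 1) = c j := by
  rw [weightedDegree_apply, Finset.sum_eq_single j]
  · simpa using ZMod.natMulHom_natCast (c j) (h j) 1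
  · intro i _ hij
    simp [Pi.single_eq_of_ne hij]
  · simp

theorem natCast_gcd_mem_range_weightedDegree (s : Finset ι) :
    ((s.gcd c : ℕ) : ZMod m) ∈ (weightedDegree h).range := by
  classical
  exact AddSubgroup.natCast_finsetGcd_mem _ s c fun j _ =>
    ⟨Pi.single j 1, weightedDegree_single h j⟩

theorem natCast_mem_range_weightedDegree_iff [∀ i, NeZero (e i)] (hm : univ.gcd c ∣ m) (N : ℕ) :
    (N : ZMod m) ∈ (weightedDegree h).range ↔ univ.gcd c ∣ N := by
  constructor
  · rintro ⟨x, hx⟩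
    rw [weightedDegree_eq_natCast_sum, ZMod.natCast_eq_natCast_iff] at hx
    exact (hx.dvd_iff hm).1 (dvd_sum fun i _ => (gcd_dvd (mem_univ i)).mul_right _)
  · rintro ⟨q, rfl⟩
    rw [Nat.cast_mul, mul_comm, ← nsmul_eq_mul]
    exact nsmul_mem (natCast_gcd_mem_range_weightedDegree h univ) q

theorem weightedDegree_surjective (hc : Nat.Coprime (univ.gcd c) m) :
    Function.Surjective (weightedDegree h) :=
  AddMonoidHom.range_eq_top.1 <| ZMod.addSubgroup_eq_top_of_isUnit_mem _
    ((ZMod.isUnit_iff_coprime _ _).2 hc) (natCast_gcd_mem_range_weightedDegree h univ)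

theorem coe_ker_weightedDegree [∀ i, NeZero (e i)] :
    ((weightedDegree h).ker : Set (∀ i, ZMod (e i))) = {x | m ∣ ∑ i, c i * (x i).val} := by
  ext x
  rw [SetLike.mem_coe, AddMonoidHom.mem_ker, weightedDegree_eq_natCast_sum,
    ZMod.natCast_eq_zero_iff, Set.mem_ofPred_eq]

variable {p q : ι → Prop} [DecidablePred p] [DecidablePred q]

theorem weightedDegree_eq_add (hpq : ∀ i, ¬ p i ↔ q i) (x : ∀ i, ZMod (e i)) :
    weightedDegree h x =
      weightedDegree (fun i : Subtype p => h i) (fun i => x i) +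
        weightedDegree (fun i : Subtype q => h i) (fun i => x i) := by
  simp only [weightedDegree_apply]
  rw [← Fintype.sum_subtype_add_sum_subtype p]
  congr 1
  exact Fintype.sum_equiv (Equiv.subtypeEquivRight hpq) _ _ fun _ => rfl

theorem mem_image_restrict_ker_weightedDegree_iff (hpq : ∀ i, ¬ p i ↔ q i)
    (t : ∀ i : Subtype q, ZMod (e i)) :
    t ∈ (fun (x : ∀ i, ZMod (e i)) (i : Subtype q) => x i) '' (weightedDegree h).ker ↔
      weightedDegree (fun i : Subtype q => h i) t ∈
        (weightedDegree (fun i : Subtype p => h i)).range := by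
  constructor
  · rintro ⟨x, hx, rfl⟩
    rw [SetLike.mem_coe, AddMonoidHom.mem_ker, weightedDegree_eq_add h hpq] at hx
    exact ⟨-fun i : Subtype p => x i, by rw [map_neg, neg_eq_iff_add_eq_zero]; exact hx⟩
  · rintro ⟨a, ha⟩
    let x : ∀ i, ZMod (e i) := fun i => if hi : p i then -a ⟨i, hi⟩ else t ⟨i, (hpq i).1 hi⟩
    have hxp : (fun i : Subtype p => x i) = -a := funext fun i => dif_pos i.2
    have hxq : (fun i : Subtype q => x i) = t := funext fun i => dif_neg ((hpq i).2 i.2)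
    refine ⟨x, ?_, hxq⟩
    rw [SetLike.mem_coe, AddMonoidHom.mem_ker, weightedDegree_eq_add h hpq, hxp, hxq, map_neg,
      ha, neg_add_cancel]

end WeightedDegree

theorem stmt_11 {n k : ℕ} (hk : 1 ≤ k) (hkn : k < n)
    (w : Fin n → ℕ) (hw : ∀ i, 0 < w i)
    (d : ℕ) (hd : d = ∑ i, w i) (hdvd : ∀ i, w i ∣ d)
    (hgcd : Finset.univ.gcd w = 1)
    (M : Set (∀ i : Fin n, ZMod (d / w i)))
    (hM : M = {x | d ∣ ∑ i, w i * (x i).val})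
    (π : (∀ i : Fin n, ZMod (d / w i)) →
        ∀ j : {i : Fin n // k ≤ (i : ℕ)}, ZMod (d / w j.val))
    (hπ : π = fun x j => x j.val)
    (g : ℕ)
    (hg : g = Finset.gcd (Finset.univ.filter (fun i : Fin n => (i : ℕ) < k)) w) :
    (∀ t : ∀ j : {i : Fin n // k ≤ (i : ℕ)}, ZMod (d / w j.val),
        t ∈ π '' M ↔ g ∣ ∑ j : {i : Fin n // k ≤ (i : ℕ)}, w j.val * (t j).val) ∧
    (π '' M).Finite ∧
    (π '' M).ncard * g = ∏ j : {i : Fin n // k ≤ (i : ℕ)}, (d / w j.val) := by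
  have hd0 : 0 < d := hd ▸ sum_pos (fun i _ => hw i) ⟨⟨0, by omega⟩, mem_univ _⟩
  have : ∀ i, NeZero (d / w i) :=
    fun i => ⟨(Nat.div_pos (Nat.le_of_dvd hd0 (hdvd i)) (hw i)).ne'⟩
  have hwd : ∀ i, d ∣ w i * (d / w i) := fun i => dvd_of_eq (Nat.mul_div_cancel' (hdvd i)).symm
  rw [← gcd_univ_subtype] at hg
  have hgd : g ∣ d := hg ▸ (gcd_dvd (mem_univ ⟨⟨0, by omega⟩, hk⟩)).trans (hdvd _)
  have hiff : ∀ t, t ∈ π '' M ↔ g ∣ ∑ j : {i : Fin n // k ≤ (i : ℕ)}, w j.val * (t j).val := by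
    intro t
    rw [hπ, hM, ← coe_ker_weightedDegree hwd,
      mem_image_restrict_ker_weightedDegree_iff hwd (fun i => not_lt),
      weightedDegree_eq_natCast_sum, hg, natCast_mem_range_weightedDegree_iff _ (hg ▸ hgd)]
  let φ := weightedDegree fun j : {i : Fin n // k ≤ (i : ℕ)} => hgd.trans (hwd j)
  have hφ : Function.Surjective φ := weightedDegree_surjective _ <| hg ▸
    (coprime_gcd_subtype_of_gcd_eq_one (fun i => not_lt) w hgcd).symm
  have himage : π '' M = φ.ker := by
    rw [coe_ker_weightedDegree]
    exact Set.ext hiff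
  refine ⟨hiff, Set.toFinite _, ?_⟩
  rw [himage, ← Nat.card_coe_set_eq, SetLike.coe_sort_coe]
  convert φ.card_ker_mul_card_of_surjective hφ using 1
  · rw [Nat.card_zmod]
  · simp only [Nat.card_pi, Nat.card_zmod]
end

section
/- Assume gcd(w_1,…,w_n) = 1, fix k with 1 ≤ k < n, and let β_1,…,β_k be nonnegative integers, not all zero, with 0 ≤ β_i < d/w_i and Σ_{i=1}^k β_i w_i = d; let β be the corresponding element of ∏_{i=1}^n ℤ/(d/w_i)ℤ with last n−k entries equal to zero, and set γ = gcd{ β_i w_i : 1 ≤ i ≤ k, β_i ≠ 0 }. Then for every tuple t in the image of the projection of M onto the last n−k coordinates: (i) the number of elements of M whose last n−k entries equal t is (gcd(w_1,…,w_k)/d) · ∏_{i=1}^k (d/w_i); and (ii) the number of orbits of the translation action of the cyclic subgroup generated by β on this fibre equals T_β = (gcd(w_1,…,w_k)/d) · (γ/d) · ∏_{i=1}^k (d/w_i). -/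
/-!
The residue `x ↦ ∑ wᵢ xᵢ` is a homomorphism `S : ∏ ℤ/(d/wᵢ) → ℤ/d`, so `M = ker S`. Fixing
the last `n - k` coordinates, a nonempty fibre is in bijection with the kernel of `S`
restricted to the first `k` coordinates; by Bézout the image of that restriction is generated
by `g = gcd(w₁,…,w_k)`, so it has order `d / g`, which gives the size of the fibre. The element
`β` satisfies `S β = 0` and vanishes on the last coordinates, so translation by `β` preserves
the fibre and acts freely on it; since `m • β = 0` iff `d ∣ m βᵢ wᵢ` for all `i`, iff `d ∣ m γ`,
every orbit has `d / γ` elements.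
-/

open Finset Pointwise

namespace ZMod

def scaleHom {d m : ℕ} (hm : m ∣ d) : ZMod (d / m) →+ ZMod d :=
  ZMod.lift _ ⟨zmultiplesHom (ZMod d) (m : ZMod d), by
    simp only [zmultiplesHom_apply, natCast_zsmul, nsmul_eq_mul]
    rw [← Nat.cast_mul, Nat.div_mul_cancel hm, ZMod.natCast_self]⟩

variable {d m : ℕ} (hm : m ∣ d)

theorem scaleHom_intCast (a : ℤ) : scaleHom hm a = a * m := by
  simp [scaleHom]

theorem scaleHom_natCast (a : ℕ) : scaleHom hm a = a * m := by
  exact_mod_cast scaleHom_intCast hm a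

theorem scaleHom_apply [NeZero (d / m)] (a : ZMod (d / m)) : scaleHom hm a = a.val * m := by
  conv_lhs => rw [← ZMod.natCast_zmod_val a]
  exact scaleHom_natCast hm a.val

end ZMod

theorem Nat.cast_finset_gcd {ι : Type*} (s : Finset ι) (v : ι → ℕ) :
    ((s.gcd v : ℕ) : ℤ) = s.gcd fun i => (v i : ℤ) := by
  classical
  induction s using Finset.induction_on with
  | empty => simp
  | insert a s _ ih =>
    rw [gcd_insert, gcd_insert, ← ih, ← Int.coe_gcd, Int.gcd_natCast_natCast]
    rfl

theorem Finset.gcd_subtype {ι α : Type*} [CommMonoidWithZero α] [NormalizedGCDMonoid α]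
    {p : ι → Prop} [Fintype (Subtype p)] (s : Finset ι) (h : ∀ x, x ∈ s ↔ p x)
    (f : ι → α) :
    s.gcd f = univ.gcd fun a : Subtype p => f a := by
  classical
  rw [← Function.comp_def, ← gcd_image]
  congr
  ext x
  simp [h]

theorem AddMonoidHom.ncard_preimage_singleton {A B : Type*} [AddGroup A] [AddGroup B]
    (f : A →+ B) (a : A) : (f ⁻¹' {f a}).ncard = Nat.card f.ker := by
  have hfibre : f ⁻¹' {f a} = (a + ·) '' f.ker := by
    ext y
    constructor
    · intro hy
      refine ⟨-a + y, ?_, add_neg_cancel_left a y⟩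
      simp_all [AddMonoidHom.mem_ker]
    · rintro ⟨z, hz, rfl⟩
      simp_all [AddMonoidHom.mem_ker]
  rw [hfibre, Set.ncard_image_of_injective _ (add_right_injective a)]
  exact Nat.card_coe_set_eq _ |>.symm

theorem setOf_add_nsmul_eq_preimage_mk {A : Type*} [AddGroup A] [Finite A] (a x : A) :
    {y | ∃ m : ℕ, y = x + m • a} =
      QuotientAddGroup.mk ⁻¹' {(x : A ⧸ AddSubgroup.zmultiples a)} := by
  ext y
  rw [Set.mem_preimage, Set.mem_singleton_iff, eq_comm, QuotientAddGroup.eq,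
    ← mem_multiples_iff_mem_zmultiples, AddSubmonoid.mem_multiples_iff]
  simp only [Set.mem_ofPred_eq, eq_comm (a := _ • a), neg_add_eq_iff_eq_add]

theorem ncard_setOf_preimage_mk_mul_card {A : Type*} [AddGroup A] (H : AddSubgroup A) {F : Set A}
    (hF : ∀ x ∈ F, ∀ h ∈ H, x + h ∈ F) :
    {S : Set A | ∃ x ∈ F, S = QuotientAddGroup.mk ⁻¹' {(x : A ⧸ H)}}.ncard * Nat.card H =
      F.ncard := by
  have himage : {S : Set A | ∃ x ∈ F, S = QuotientAddGroup.mk ⁻¹' {(x : A ⧸ H)}} =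
      (fun q : A ⧸ H => QuotientAddGroup.mk ⁻¹' {q}) '' (QuotientAddGroup.mk '' F) := by
    rw [Set.image_image]
    ext S
    simp [eq_comm]
  have hinj : Function.Injective fun q : A ⧸ H => (QuotientAddGroup.mk ⁻¹' {q} : Set A) :=
    (Set.preimage_injective.mpr QuotientAddGroup.mk_surjective).comp Set.singleton_injective
  have hFH : F + (H : Set A) = F :=
    subset_antisymm (by rintro _ ⟨x, hx, h, hh, rfl⟩; exact hF x hx h hh)
      fun x hx => ⟨x, hx, 0, H.zero_mem, add_zero x⟩
  rw [himage, Set.ncard_image_of_injective _ hinj, mul_comm, ← Nat.card_coe_set_eq,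
    ← AddSubgroup.card_add_eq_card_addSubgroup_add_card_quotient, hFH, Nat.card_coe_set_eq]

theorem ncard_orbits_add_nsmul_mul_addOrderOf {A : Type*} [AddGroup A] [Finite A] (a : A)
    {F : Set A} (hF : ∀ x ∈ F, x + a ∈ F) :
    {S : Set A | ∃ x ∈ F, S = {y | ∃ m : ℕ, y = x + m • a}}.ncard * addOrderOf a =
      F.ncard := by
  have hnsmul : ∀ m : ℕ, ∀ x ∈ F, x + m • a ∈ F := by
    intro m
    induction m with
    | zero => simp
    | succ m ih => exact fun x hx => by simpa [succ_nsmul, add_assoc] using hF _ (ih x hx)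
  have hstable : ∀ x ∈ F, ∀ h ∈ AddSubgroup.zmultiples a, x + h ∈ F := by
    intro x hx h hh
    obtain ⟨m, rfl⟩ :=
      (AddSubmonoid.mem_multiples_iff _ _).mp (mem_multiples_iff_mem_zmultiples.mpr hh)
    exact hnsmul m x hx
  simp_rw [setOf_add_nsmul_eq_preimage_mk, ← Nat.card_zmultiples]
  exact ncard_setOf_preimage_mk_mul_card _ hstable

section WeightedSum

variable {ι : Type*} [Fintype ι] {d : ℕ} {w : ι → ℕ} (hw : ∀ i, w i ∣ d)

def weightedSum : (∀ i, ZMod (d / w i)) →+ ZMod d :=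
  AddMonoidHom.mk' (fun x => ∑ i, ZMod.scaleHom (hw i) (x i)) fun x y => by
    simp only [Pi.add_apply, map_add, sum_add_distrib]

theorem weightedSum_apply (x : ∀ i, ZMod (d / w i)) :
    weightedSum hw x = ∑ i, ZMod.scaleHom (hw i) (x i) := rfl

theorem weightedSum_eq_zero_iff [∀ i, NeZero (d / w i)] (x : ∀ i, ZMod (d / w i)) :
    weightedSum hw x = 0 ↔ d ∣ ∑ i, w i * (x i).val := by
  rw [← ZMod.natCast_eq_zero_iff]
  simp [weightedSum_apply, ZMod.scaleHom_apply, mul_comm]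

theorem weightedSum_natCast (b : ι → ℕ) :
    weightedSum hw (fun i => (b i : ZMod (d / w i))) = ((∑ i, b i * w i : ℕ) : ZMod d) := by
  simp [weightedSum_apply, ZMod.scaleHom_natCast]

theorem weightedSum_eq_add (p : ι → Prop) [DecidablePred p] (x : ∀ i, ZMod (d / w i)) :
    weightedSum hw x = weightedSum (fun i : {i // p i} => hw i) (fun i => x i) +
      weightedSum (fun i : {i // ¬ p i} => hw i) (fun i => x i) :=
  (Fintype.sum_subtype_add_sum_subtype p fun i => ZMod.scaleHom (hw i) (x i)).symm

theorem range_weightedSum :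
    (weightedSum hw).range = AddSubgroup.zmultiples ((univ.gcd w : ℕ) : ZMod d) := by
  apply le_antisymm
  · rintro _ ⟨x, rfl⟩
    refine AddSubgroup.sum_mem _ fun i _ => ?_
    obtain ⟨a, ha⟩ := ZMod.intCast_surjective (x i)
    obtain ⟨c, hc⟩ := gcd_dvd (mem_univ i) (f := w)
    refine AddSubgroup.mem_zmultiples_iff.mpr ⟨a * c, ?_⟩
    rw [← ha, ZMod.scaleHom_intCast, hc]
    simp only [zsmul_eq_mul, Int.cast_mul, Int.cast_natCast, Nat.cast_mul]
    ring
  · obtain ⟨c, hc⟩ := Finset.gcd_eq_sum_mul univ fun i => (w i : ℤ)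
    rw [AddSubgroup.zmultiples_le]
    refine ⟨fun i => (c i : ZMod (d / w i)), ?_⟩
    rw [weightedSum_apply, ← Int.cast_natCast, Nat.cast_finset_gcd, hc]
    simp [ZMod.scaleHom_intCast, mul_comm]

theorem card_ker_weightedSum_mul [Nonempty ι] (hd : d ≠ 0) :
    Nat.card (weightedSum hw).ker * d = univ.gcd w * ∏ i, d / w i := by
  obtain ⟨i⟩ := ‹Nonempty ι›
  have hg : univ.gcd w ∣ d := (gcd_dvd (mem_univ i)).trans (hw i)
  have hrange : Nat.card (weightedSum hw).range = d / univ.gcd w := by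
    rw [range_weightedSum, Nat.card_zmultiples, ZMod.addOrderOf_coe _ hd, Nat.gcd_eq_right hg]
  have hcard :
      ∏ i, d / w i = Nat.card (weightedSum hw).range * Nat.card (weightedSum hw).ker := by
    rw [← Nat.card_congr (QuotientAddGroup.quotientKerEquivRange _).toEquiv,
      ← AddSubgroup.card_eq_card_quotient_mul_card_addSubgroup, Nat.card_pi]
    simp only [Nat.card_zmod]
  calc Nat.card (weightedSum hw).ker * d
      = univ.gcd w * (d / univ.gcd w * Nat.card (weightedSum hw).ker) := by
        rw [← mul_assoc, Nat.mul_div_cancel' hg, mul_comm]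
    _ = univ.gcd w * ∏ i, d / w i := by rw [hcard, hrange]

theorem ncard_weightedSum_fibre (p : ι → Prop) [DecidablePred p] (x₀ : ∀ i, ZMod (d / w i))
    (hx₀ : weightedSum hw x₀ = 0) :
    {x | weightedSum hw x = 0 ∧
      (fun i : {i // p i} => x i) = fun i : {i // p i} => x₀ i}.ncard =
        Nat.card (weightedSum (fun i : {i // ¬ p i} => hw i)).ker := by
  set e := Equiv.piEquivPiSubtypeProd p fun i => ZMod (d / w i)
  set Sq := weightedSum (fun i : {i // ¬ p i} => hw i)
  have hsplit : ∀ x,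
      weightedSum hw x = weightedSum (fun i : {i // p i} => hw i) (e x).1 + Sq (e x).2 :=
    weightedSum_eq_add hw p
  have himage : e '' {x | weightedSum hw x = 0 ∧
      (fun i : {i // p i} => x i) = fun i : {i // p i} => x₀ i} =
        {(e x₀).1} ×ˢ (Sq ⁻¹' {Sq (e x₀).2}) := by
    rw [e.image_eq_preimage_symm]
    ext ⟨z, y⟩
    change weightedSum hw (e.symm (z, y)) = 0 ∧ (e (e.symm (z, y))).1 = (e x₀).1 ↔
      z = (e x₀).1 ∧ Sq y = Sq (e x₀).2
    rw [hsplit, e.apply_symm_apply]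
    rw [hsplit] at hx₀
    constructor
    · rintro ⟨h, rfl⟩
      exact ⟨rfl, add_left_cancel (h.trans hx₀.symm)⟩
    · rintro ⟨rfl, h⟩
      exact ⟨by rw [h, hx₀], rfl⟩
  rw [← Set.ncard_image_of_injective _ e.injective, himage, Set.ncard_prod, Set.ncard_singleton,
    one_mul, AddMonoidHom.ncard_preimage_singleton]

theorem ncard_weightedSum_fibre_mul (hd : d ≠ 0) (p : ι → Prop) [DecidablePred p]
    (hp : ∃ i, ¬ p i) (x₀ : ∀ i, ZMod (d / w i)) (hx₀ : weightedSum hw x₀ = 0) :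
    {x | weightedSum hw x = 0 ∧
      (fun i : {i // p i} => x i) = fun i : {i // p i} => x₀ i}.ncard * d =
        (univ.filter (¬ p ·)).gcd w * ∏ i ∈ univ.filter (¬ p ·), d / w i := by
  obtain ⟨i, hi⟩ := hp
  have : Nonempty {i // ¬ p i} := ⟨⟨i, hi⟩⟩
  have hmem : ∀ i, i ∈ univ.filter (¬ p ·) ↔ ¬ p i := by simp
  rw [ncard_weightedSum_fibre hw p x₀ hx₀, card_ker_weightedSum_mul _ hd, gcd_subtype _ hmem,
    prod_subtype _ hmem]

end WeightedSum

section AddOrder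

variable {ι : Type*} [Fintype ι] {d : ℕ} {w : ι → ℕ}

theorem nsmul_natCast_pi_eq_zero_iff (hw : ∀ i, w i ∣ d) (hd : d ≠ 0) (b : ι → ℕ)
    (m : ℕ) :
    m • (fun i => (b i : ZMod (d / w i))) = 0 ↔ d ∣ m * univ.gcd fun i => b i * w i := by
  have hw0 : ∀ i, 0 < w i := fun i => Nat.pos_of_dvd_of_pos (hw i) (Nat.pos_of_ne_zero hd)
  rw [show m * univ.gcd (fun i => b i * w i) = univ.gcd fun i => m * (b i * w i) by
    rw [Finset.gcd_mul_left, normalize_eq], Finset.dvd_gcd_iff, funext_iff]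
  simp only [Pi.smul_apply, Pi.zero_apply, nsmul_eq_mul, ← Nat.cast_mul, ZMod.natCast_eq_zero_iff,
    mem_univ, true_imp_iff]
  refine forall_congr' fun i => ?_
  rw [Nat.div_dvd_iff_dvd_mul (hw i) (hw0 i)]
  ring_nf

theorem addOrderOf_natCast_pi (hw : ∀ i, w i ∣ d) (hd : d ≠ 0) (b : ι → ℕ)
    (hb : univ.gcd (fun i => b i * w i) ∣ d) :
    addOrderOf (fun i => (b i : ZMod (d / w i))) = d / univ.gcd fun i => b i * w i := by
  have hb0 : 0 < univ.gcd fun i => b i * w i :=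
    Nat.pos_of_ne_zero fun h => hd (zero_dvd_iff.mp (h ▸ hb))
  refine Nat.dvd_right_iff_eq.mp fun m => ?_
  rw [addOrderOf_dvd_iff_nsmul_eq_zero, nsmul_natCast_pi_eq_zero_iff hw hd,
    Nat.div_dvd_iff_dvd_mul hb hb0, mul_comm]

end AddOrder

theorem stmt_12_general {n k : ℕ}
    (w : Fin n → ℕ)
    (d : ℕ) (hdvd : ∀ i, w i ∣ d)
    (M : Set (∀ i : Fin n, ZMod (d / w i)))
    (hM : M = {x | d ∣ ∑ i, w i * (x i).val})
    (β : Fin n → ℕ) (hβlt : ∀ i, β i < d / w i)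
    (hβ0 : ∀ i : Fin n, k ≤ (i : ℕ) → β i = 0)
    (hβne : ∃ i : Fin n, β i ≠ 0)
    (hβd : ∑ i, β i * w i = d)
    (γ : ℕ) (hγ : γ = Finset.univ.gcd (fun i => β i * w i))
    (g : ℕ)
    (hg : g = Finset.gcd (Finset.univ.filter (fun i : Fin n => (i : ℕ) < k)) w)
    (βg : ∀ i : Fin n, ZMod (d / w i))
    (hβg : βg = fun i => ((β i : ℕ) : ZMod (d / w i)))
    (orb : (∀ i : Fin n, ZMod (d / w i)) → Set (∀ i : Fin n, ZMod (d / w i)))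
    (horb : orb = fun x => {y | ∃ t : ℕ, y = x + t • βg})
    (π : (∀ i : Fin n, ZMod (d / w i)) →
        ∀ j : {i : Fin n // k ≤ (i : ℕ)}, ZMod (d / w j.val))
    (hπ : π = fun x j => x j.val)
    (t : ∀ j : {i : Fin n // k ≤ (i : ℕ)}, ZMod (d / w j.val))
    (ht : t ∈ π '' M) :
    {x | x ∈ M ∧ π x = t}.ncard * d =
        g * ∏ i ∈ Finset.univ.filter (fun i : Fin n => (i : ℕ) < k), (d / w i) ∧
    {S : Set (∀ i : Fin n, ZMod (d / w i)) |
        ∃ x, (x ∈ M ∧ π x = t) ∧ S = orb x}.ncard * d * d =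
      g * γ * ∏ i ∈ Finset.univ.filter (fun i : Fin n => (i : ℕ) < k), (d / w i) := by
  obtain ⟨i₀, hi₀⟩ := hβne
  have : ∀ i, NeZero (d / w i) := fun i => ⟨Nat.ne_zero_of_lt (hβlt i)⟩
  have hd : d ≠ 0 := fun h => NeZero.ne (d / w i₀) (by rw [h, Nat.zero_div])
  set F := {x | x ∈ M ∧ π x = t}
  have hF : ∀ x, x ∈ F ↔ weightedSum hdvd x = 0 ∧ π x = t := by
    simp [F, hM, weightedSum_eq_zero_iff]
  have hcardF : F.ncard * d = g * ∏ i ∈ univ.filter (fun i : Fin n => (i : ℕ) < k), d / w i := by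
    obtain ⟨x₀, hx₀, rfl⟩ := ht
    have hfibre : F = {x | weightedSum hdvd x = 0 ∧
        (fun j : {i : Fin n // k ≤ (i : ℕ)} => x j) = fun j : {i : Fin n // k ≤ (i : ℕ)} => x₀ j} := by
      ext x
      rw [hF, hπ]
      rfl
    rw [hfibre, ncard_weightedSum_fibre_mul hdvd hd _ ⟨i₀, fun h => hi₀ (hβ0 i₀ h)⟩ x₀
      ((hF x₀).mp ⟨hx₀, rfl⟩).1, hg]
    simp only [not_le]
  have hstable : ∀ x ∈ F, x + βg ∈ F := by
    intro x hx
    rw [hF] at hx ⊢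
    refine ⟨?_, ?_⟩
    · rw [map_add, hx.1, hβg, weightedSum_natCast, hβd, ZMod.natCast_self, add_zero]
    · rw [← hx.2, hπ]
      funext j
      simp [hβg, hβ0 j j.2]
  have hγd : γ ∣ d := hγ ▸ hβd ▸ dvd_sum fun i _ => gcd_dvd (mem_univ i)
  have horbits : {S | ∃ x, (x ∈ M ∧ π x = t) ∧ S = orb x}.ncard * (d / γ) = F.ncard := by
    have horder : addOrderOf βg = d / γ :=
      hβg ▸ hγ ▸ addOrderOf_natCast_pi hdvd hd β (hγ ▸ hγd)
    rw [← horder, horb]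
    exact ncard_orbits_add_nsmul_mul_addOrderOf βg hstable
  refine ⟨hcardF, ?_⟩
  calc _ = {S | ∃ x, (x ∈ M ∧ π x = t) ∧ S = orb x}.ncard * (d / γ * γ) * d := by
        rw [Nat.div_mul_cancel hγd]
    _ = F.ncard * d * γ := by rw [← horbits]; ring
    _ = _ := by rw [hcardF]; ring

theorem stmt_12 {n k : ℕ} (hk : 1 ≤ k) (hkn : k < n)
    (w : Fin n → ℕ) (hw : ∀ i, 0 < w i)
    (d : ℕ) (hd : d = ∑ i, w i) (hdvd : ∀ i, w i ∣ d)
    (hgcd : Finset.univ.gcd w = 1)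
    (M : Set (∀ i : Fin n, ZMod (d / w i)))
    (hM : M = {x | d ∣ ∑ i, w i * (x i).val})
    (β : Fin n → ℕ) (hβlt : ∀ i, β i < d / w i)
    (hβ0 : ∀ i : Fin n, k ≤ (i : ℕ) → β i = 0)
    (hβne : ∃ i : Fin n, β i ≠ 0)
    (hβd : ∑ i, β i * w i = d)
    (γ : ℕ) (hγ : γ = Finset.univ.gcd (fun i => β i * w i))
    (g : ℕ)
    (hg : g = Finset.gcd (Finset.univ.filter (fun i : Fin n => (i : ℕ) < k)) w)
    (βg : ∀ i : Fin n, ZMod (d / w i))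
    (hβg : βg = fun i => ((β i : ℕ) : ZMod (d / w i)))
    (orb : (∀ i : Fin n, ZMod (d / w i)) → Set (∀ i : Fin n, ZMod (d / w i)))
    (horb : orb = fun x => {y | ∃ t : ℕ, y = x + t • βg})
    (π : (∀ i : Fin n, ZMod (d / w i)) →
        ∀ j : {i : Fin n // k ≤ (i : ℕ)}, ZMod (d / w j.val))
    (hπ : π = fun x j => x j.val)
    (t : ∀ j : {i : Fin n // k ≤ (i : ℕ)}, ZMod (d / w j.val))
    (ht : t ∈ π '' M) :
    {x | x ∈ M ∧ π x = t}.ncard * d =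
        g * ∏ i ∈ Finset.univ.filter (fun i : Fin n => (i : ℕ) < k), (d / w i) ∧
    {S : Set (∀ i : Fin n, ZMod (d / w i)) |
        ∃ x, (x ∈ M ∧ π x = t) ∧ S = orb x}.ncard * d * d =
      g * γ * ∏ i ∈ Finset.univ.filter (fun i : Fin n => (i : ℕ) < k), (d / w i) :=
  stmt_12_general w d hdvd M hM β hβlt hβ0 hβne hβd γ hγ g hg βg hβg orb horb π hπ t ht
end

section
/- Fix k with 1 ≤ k < n and assume gcd(w_1,…,w_k) = 1. Then the number of tuples t = (t_{k+1},…,t_n) ∈ ∏_{i=k+1}^n ℤ/(d/w_i)ℤ that occur as the last n−k entries of some element of M and satisfy t_i ≠ (d/w_i) − 1 (as a residue mod d/w_i) for every k < i ≤ n, is exactly ∏_{i=k+1}^n (d/w_i − 1). In particular, under the hypothesis gcd(w_1,…,w_k) = 1 every tuple of last n−k entries occurs in M. -/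
/-! Since `gcd (w_1, …, w_k) = 1`, Bézout gives integers `c_i` with `∑_{i ≤ k} c_i w_i = 1`.
Given arbitrary last entries with weighted sum `S`, the first entries `x_i = -S c_i` complete them
to an element of `M`, because `w_i x_i mod d` only depends on `x_i mod d / w_i`. So every tuple of
last entries occurs, and the count is that of the box `∏_{i > k} (ZMod (d / w_i) \ {-1})`. -/

theorem Finset.natCast_gcd {ι : Type*} (s : Finset ι) (f : ι → ℕ) :
    ((s.gcd f : ℕ) : ℤ) = s.gcd (fun i => (f i : ℤ)) := by
  induction s using Finset.cons_induction with
  | empty => simp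
  | cons a s ha ih =>
    rw [Finset.gcd_cons, Finset.gcd_cons, ← ih, ← Int.coe_gcd, Int.gcd_natCast_natCast]
    rfl

theorem ZMod.val_eq_sub_one_iff {n : ℕ} [NeZero n] {z : ZMod n} : z.val = n - 1 ↔ z = -1 := by
  obtain ⟨m, rfl⟩ := Nat.exists_eq_succ_of_ne_zero (NeZero.ne n)
  rw [← (ZMod.val_injective _).eq_iff, ZMod.val_neg_one, Nat.succ_sub_one]

theorem ZMod.ncard_pi_val_ne_sub_one {ι : Type*} [Fintype ι] (m : ι → ℕ) [∀ j, NeZero (m j)] :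
    {t : ∀ j, ZMod (m j) | ∀ j, (t j).val ≠ m j - 1}.ncard = ∏ j, (m j - 1) := by
  classical
  have hbox : {t : ∀ j, ZMod (m j) | ∀ j, (t j).val ≠ m j - 1} =
      ↑(Fintype.piFinset fun j => ({-1}ᶜ : Finset (ZMod (m j)))) := by
    ext t
    simp [ZMod.val_eq_sub_one_iff]
  rw [hbox, Set.ncard_coe_finset, Fintype.card_piFinset]
  simp [Finset.card_compl, ZMod.card]

theorem ZMod.natCast_mul_val_intCast {w d : ℕ} (h : w ∣ d) [NeZero (d / w)] (a : ℤ) :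
    ((w * (a : ZMod (d / w)).val : ℕ) : ZMod d) = w * a := by
  have hval : ((w * (a : ZMod (d / w)).val : ℕ) : ℤ) = w * (a % (d / w : ℕ)) := by
    rw [Nat.cast_mul, ZMod.val_intCast]
  rw [← Int.cast_natCast (R := ZMod d), hval, show (w : ZMod d) * a = ((w * a : ℤ) : ZMod d) by
    push_cast; rfl, ZMod.intCast_eq_intCast_iff_dvd_sub, Int.emod_def, ← mul_sub, sub_sub_cancel,
    ← mul_assoc]
  exact dvd_mul_of_dvd_left (by rw [← Nat.cast_mul, Nat.mul_div_cancel' h]) _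

theorem exists_dvd_sum_mul_val_of_gcd_eq_one {ι : Type*} [Fintype ι] [DecidableEq ι] {w : ι → ℕ}
    {d : ℕ} (hdvd : ∀ i, w i ∣ d) [∀ i, NeZero (d / w i)] {s : Finset ι} (hs : s.gcd w = 1)
    (x : ∀ i, ZMod (d / w i)) :
    ∃ y : ∀ i, ZMod (d / w i), (∀ i ∉ s, y i = x i) ∧ d ∣ ∑ i, w i * (y i).val := by
  obtain ⟨c, hc⟩ := Finset.gcd_eq_sum_mul s (fun i => (w i : ℤ))
  rw [← Finset.natCast_gcd, hs, Nat.cast_one] at hc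
  set r : ℤ := -∑ i ∈ sᶜ, ((w i * (x i).val : ℕ) : ℤ)
  set y : ∀ i, ZMod (d / w i) := fun i => if i ∈ s then ((r * c i : ℤ) : ZMod (d / w i)) else x i
  have hy_off : ∀ i ∉ s, y i = x i := fun i hi => if_neg hi
  have hsum_off : ∑ i ∈ sᶜ, ((w i * (y i).val : ℕ) : ZMod d) = -(r : ZMod d) := by
    calc ∑ i ∈ sᶜ, ((w i * (y i).val : ℕ) : ZMod d)
        = ∑ i ∈ sᶜ, ((w i * (x i).val : ℕ) : ZMod d) :=
          Finset.sum_congr rfl fun i hi => by rw [hy_off i (Finset.mem_compl.mp hi)]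
      _ = -(r : ZMod d) := by simp [r]
  have hsum_on : ∑ i ∈ s, ((w i * (y i).val : ℕ) : ZMod d) = r := by
    calc ∑ i ∈ s, ((w i * (y i).val : ℕ) : ZMod d)
        = ∑ i ∈ s, (w i : ZMod d) * (r * c i : ℤ) :=
          Finset.sum_congr rfl fun i hi => by
            rw [show y i = _ from if_pos hi, ZMod.natCast_mul_val_intCast (hdvd i)]
      _ = r * ((∑ i ∈ s, w i * c i : ℤ) : ZMod d) := by
          push_cast
          rw [Finset.mul_sum]
          exact Finset.sum_congr rfl fun i _ => by ring
      _ = r := by rw [← hc, Int.cast_one, mul_one]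
  refine ⟨y, hy_off, ?_⟩
  rw [← ZMod.natCast_eq_zero_iff, Nat.cast_sum, ← Finset.sum_compl_add_sum s, hsum_off, hsum_on,
    neg_add_cancel]

theorem stmt_13_general {n k : ℕ}
    (w : Fin n → ℕ)
    (d : ℕ) (hd : d = ∑ i, w i) (hdvd : ∀ i, w i ∣ d)
    (hgcdk : Finset.gcd (Finset.univ.filter (fun i : Fin n => (i : ℕ) < k)) w = 1)
    (M : Set (∀ i : Fin n, ZMod (d / w i)))
    (hM : M = {x | d ∣ ∑ i, w i * (x i).val})
    (π : (∀ i : Fin n, ZMod (d / w i)) →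
        ∀ j : {i : Fin n // k ≤ (i : ℕ)}, ZMod (d / w j.val))
    (hπ : π = fun x j => x j.val) :
    (∀ t : ∀ j : {i : Fin n // k ≤ (i : ℕ)}, ZMod (d / w j.val), t ∈ π '' M) ∧
    {t : ∀ j : {i : Fin n // k ≤ (i : ℕ)}, ZMod (d / w j.val) |
        t ∈ π '' M ∧ ∀ j, (t j).val ≠ d / w j.val - 1}.Finite ∧
    {t : ∀ j : {i : Fin n // k ≤ (i : ℕ)}, ZMod (d / w j.val) |
        t ∈ π '' M ∧ ∀ j, (t j).val ≠ d / w j.val - 1}.ncard =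
      ∏ j : {i : Fin n // k ≤ (i : ℕ)}, (d / w j.val - 1) := by
  have hd0 : d ≠ 0 := by
    rintro rfl
    rw [eq_comm, Finset.sum_eq_zero_iff] at hd
    simp [Finset.gcd_eq_zero_iff.mpr fun i _ => hd i (Finset.mem_univ i)] at hgcdk
  have (i : Fin n) : NeZero (d / w i) :=
    ⟨right_ne_zero_of_mul ((Nat.mul_div_cancel' (hdvd i)).symm ▸ hd0)⟩
  have hsurj : ∀ t : ∀ j : {i : Fin n // k ≤ (i : ℕ)}, ZMod (d / w j.val), t ∈ π '' M := by
    intro t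
    obtain ⟨y, hy, hyM⟩ := exists_dvd_sum_mul_val_of_gcd_eq_one hdvd hgcdk
      (fun i => if h : k ≤ (i : ℕ) then t ⟨i, h⟩ else 0)
    refine ⟨y, hM ▸ hyM, hπ ▸ funext fun j => ?_⟩
    change y j = t j
    rw [hy j (by simpa using j.2)]
    exact dif_pos j.2
  simp only [hsurj, true_and]
  exact ⟨fun _ => trivial, Set.toFinite _, ZMod.ncard_pi_val_ne_sub_one _⟩

theorem stmt_13 {n k : ℕ} (hk : 1 ≤ k) (hkn : k < n)
    (w : Fin n → ℕ) (hw : ∀ i, 0 < w i)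
    (d : ℕ) (hd : d = ∑ i, w i) (hdvd : ∀ i, w i ∣ d)
    (hgcdk : Finset.gcd (Finset.univ.filter (fun i : Fin n => (i : ℕ) < k)) w = 1)
    (M : Set (∀ i : Fin n, ZMod (d / w i)))
    (hM : M = {x | d ∣ ∑ i, w i * (x i).val})
    (π : (∀ i : Fin n, ZMod (d / w i)) →
        ∀ j : {i : Fin n // k ≤ (i : ℕ)}, ZMod (d / w j.val))
    (hπ : π = fun x j => x j.val) :
    (∀ t : ∀ j : {i : Fin n // k ≤ (i : ℕ)}, ZMod (d / w j.val), t ∈ π '' M) ∧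
    {t : ∀ j : {i : Fin n // k ≤ (i : ℕ)}, ZMod (d / w j.val) |
        t ∈ π '' M ∧ ∀ j, (t j).val ≠ d / w j.val - 1}.Finite ∧
    {t : ∀ j : {i : Fin n // k ≤ (i : ℕ)}, ZMod (d / w j.val) |
        t ∈ π '' M ∧ ∀ j, (t j).val ≠ d / w j.val - 1}.ncard =
      ∏ j : {i : Fin n // k ≤ (i : ℕ)}, (d / w j.val - 1) :=
  stmt_13_general w d hd hdvd hgcdk M hM π hπ
end
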